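/- arXiv:2402.17240 — 4 statements merged into one kernel-verified Lean document; each statement's English description precedes it below -/
import Mathlib

section
/- Let k be a positive integer and let G be a finite totally k-closed group. Then the center Z(G) is also totally k-closed. -/
/-!
Let `Z = Z(G)` act faithfully on `Ω` and let `x` lie in the `k`-closure of its image. Induce the
action up to `G`: on `(G ⧸ Z) × Ω` the element `g` sends `(c, ω)` to `(g • c, h ω)` with
`h ∈ Z` the correction relating chosen coset representatives. This action of `G` is faithful, and
since `Z` is central each `z ∈ Z` acts as `id × z`; hence `id × x` lies in the `k`-closure of the
image of `G`, which by total `k`-closedness of `G` is that image. An element of `G` acting as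
`id × x` fixes the coset `Z`, so lies in `Z`, and then acts on `Ω` as `x`.
-/

/-- The `k`-closure of a subgroup `G ≤ Sym(Ω)` (Wielandt's characterization): the set of
permutations `x` such that for every `k`-tuple there is a `g ∈ G` agreeing with `x` on it. -/
def kClosure {Ω : Type*} (k : ℕ) (G : Subgroup (Equiv.Perm Ω)) : Subgroup (Equiv.Perm Ω) where
  carrier := {x | ∀ α : Fin k → Ω, ∃ g ∈ G, ∀ i, x (α i) = g (α i)}
  one_mem' := fun α => ⟨1, G.one_mem, fun _ => rfl⟩
  mul_mem' := by
    intro x y hx hy α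
    obtain ⟨g, hg, hgy⟩ := hy α
    obtain ⟨g', hg', hgx⟩ := hx (fun i => y (α i))
    refine ⟨g' * g, G.mul_mem hg' hg, fun i => ?_⟩
    simp only [Equiv.Perm.mul_apply]
    rw [hgx i, hgy i]
  inv_mem' := by
    intro x hx α
    obtain ⟨g, hg, hgx⟩ := hx (fun i => x⁻¹ (α i))
    refine ⟨g⁻¹, G.inv_mem hg, fun i => ?_⟩
    have h := hgx i
    simp only [Equiv.Perm.coe_inv, Equiv.apply_symm_apply] at h
    exact Equiv.Perm.eq_inv_iff_eq.mpr h.symm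

/-- A finite group is totally `k`-closed if the image of every faithful permutation
representation on a finite set equals its own `k`-closure. -/
def IsTotallyKClosed (k : ℕ) (G : Type*) [Group G] : Prop :=
  ∀ (Ω : Type) [Fintype Ω] (φ : G →* Equiv.Perm Ω), Function.Injective φ →
    kClosure k φ.range = φ.range

section KClosure

variable {Ω Δ : Type*} {k : ℕ}

lemma le_kClosure (H : Subgroup (Equiv.Perm Ω)) : H ≤ kClosure k H :=
  fun x hx _ => ⟨x, hx, fun _ => rfl⟩

lemma permCongr_mem_kClosure_map (e : Ω ≃ Δ) {H : Subgroup (Equiv.Perm Ω)} {x : Equiv.Perm Ω}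
    (hx : x ∈ kClosure k H) :
    e.permCongr x ∈ kClosure k (H.map e.permCongrHom.toMonoidHom) := by
  intro α
  obtain ⟨g, hg, hxg⟩ := hx (e.symm ∘ α)
  refine ⟨e.permCongr g, ⟨g, hg, rfl⟩, fun i => ?_⟩
  simp only [Equiv.permCongr_apply, Function.comp_apply] at hxg ⊢
  rw [hxg]

end KClosure

/-- `IsTotallyKClosed` only quantifies over `Ω : Type`; transporting along `Ω ≃ Fin n` extends it to
finite types in any universe. -/
lemma IsTotallyKClosed.kClosure_range_eq {k : ℕ} {G : Type*} [Group G]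
    (h : IsTotallyKClosed k G) {Δ : Type*} [Finite Δ] (ψ : G →* Equiv.Perm Δ)
    (hψ : Function.Injective ψ) : kClosure k ψ.range = ψ.range := by
  refine le_antisymm (fun x hx => ?_) (le_kClosure _)
  obtain ⟨n, ⟨e⟩⟩ := Finite.exists_equiv_fin Δ
  let E := e.permCongrHom.toMonoidHom
  have hclosed := h (Fin n) (E.comp ψ) (e.permCongrHom.injective.comp hψ)
  have hEx : E x ∈ (E.comp ψ).range := by
    rw [← hclosed, MonoidHom.range_comp]
    exact permCongr_mem_kClosure_map e hx
  obtain ⟨g, hg⟩ := hEx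
  exact ⟨g, e.permCongrHom.injective hg⟩

section Induced

variable {G : Type*} [Group G] {H : Subgroup G} {Ω : Type*}

noncomputable def inducedCocycle (g : G) (c : G ⧸ H) : H :=
  ⟨(g • c).out⁻¹ * (g * c.out), QuotientGroup.eq.mp <| by
    rw [QuotientGroup.out_eq', ← smul_eq_mul, ← MulAction.Quotient.smul_mk, QuotientGroup.out_eq']⟩

lemma inducedCocycle_mul (g₁ g₂ : G) (c : G ⧸ H) :
    inducedCocycle (g₁ * g₂) c = inducedCocycle g₁ (g₂ • c) * inducedCocycle g₂ c := by
  ext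
  simp only [inducedCocycle, Subgroup.coe_mul, mul_smul]
  group

lemma inducedCocycle_one (c : G ⧸ H) : inducedCocycle (1 : G) c = 1 := by
  ext
  simp [inducedCocycle]

variable (φ : H →* Equiv.Perm Ω)

/-- The induced action of `G` on `(G ⧸ H) × Ω ≃ G ×_H Ω`, read through the transversal `out`. -/
noncomputable def inducedAction : G →* Function.End ((G ⧸ H) × Ω) where
  toFun g p := (g • p.1, φ (inducedCocycle g p.1) p.2)
  map_one' := by
    funext p
    simp only [one_smul, inducedCocycle_one, map_one]
    rfl
  map_mul' g₁ g₂ := by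
    funext p
    simp only [mul_smul, inducedCocycle_mul, map_mul]
    rfl

noncomputable def inducedPermHom : G →* Equiv.Perm ((G ⧸ H) × Ω) :=
  Equiv.Perm.equivUnitsEnd.symm.toMonoidHom.comp (inducedAction φ).toHomUnits

@[simp]
lemma inducedPermHom_apply (g : G) (p : (G ⧸ H) × Ω) :
    inducedPermHom φ g p = (g • p.1, φ (inducedCocycle g p.1) p.2) :=
  rfl

lemma smul_coset_eq_self_of_mem_center (z : H) (hz : (z : G) ∈ Subgroup.center G) (c : G ⧸ H) :
    (z : G) • c = c := by
  induction c using QuotientGroup.induction_on with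
  | H a =>
    rw [MulAction.Quotient.smul_mk, smul_eq_mul, ← Subgroup.mem_center_iff.mp hz a]
    exact QuotientGroup.mk_mul_of_mem a z.2

lemma inducedCocycle_of_mem_center (z : H) (hz : (z : G) ∈ Subgroup.center G) (c : G ⧸ H) :
    inducedCocycle (z : G) c = z := by
  ext
  change ((z : G) • c).out⁻¹ * (z * c.out) = z
  rw [smul_coset_eq_self_of_mem_center z hz, ← Subgroup.mem_center_iff.mp hz]
  exact inv_mul_cancel_left _ _

lemma inducedPermHom_apply_of_mem_center (z : H) (hz : (z : G) ∈ Subgroup.center G)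
    (p : (G ⧸ H) × Ω) : inducedPermHom φ z p = (p.1, φ z p.2) := by
  rw [inducedPermHom_apply, smul_coset_eq_self_of_mem_center z hz,
    inducedCocycle_of_mem_center z hz]

variable {φ}

lemma exists_eq_of_inducedPermHom_eq_prodCongr [Nonempty Ω] (hH : H ≤ Subgroup.center G) {g : G}
    {x : Equiv.Perm Ω} (hg : inducedPermHom φ g = (Equiv.refl (G ⧸ H)).prodCongr x) :
    ∃ z : H, (z : G) = g ∧ φ z = x := by
  obtain ⟨ω₀⟩ := ‹Nonempty Ω›
  have hg (ω : Ω) := DFunLike.congr_fun hg (((1 : G) : G ⧸ H), ω)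
  have hgH : g ∈ H := by
    have h1 : ((1 : G) : G ⧸ H) = g • ((1 : G) : G ⧸ H) := (congrArg Prod.fst (hg ω₀)).symm
    rwa [MulAction.Quotient.smul_mk, smul_eq_mul, mul_one, QuotientGroup.eq, inv_one,
      one_mul] at h1
  refine ⟨⟨g, hgH⟩, rfl, Equiv.ext fun ω => ?_⟩
  have h2 := hg ω
  rw [inducedPermHom_apply_of_mem_center φ ⟨g, hgH⟩ (hH hgH)] at h2
  exact congrArg Prod.snd h2

lemma inducedPermHom_injective [Nonempty Ω] (hH : H ≤ Subgroup.center G)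
    (hφ : Function.Injective φ) : Function.Injective (inducedPermHom φ) := by
  rw [injective_iff_map_eq_one]
  intro g hg
  obtain ⟨z, rfl, hz⟩ := exists_eq_of_inducedPermHom_eq_prodCongr (x := 1) hH hg
  rw [hφ (hz.trans φ.map_one.symm), Subgroup.coe_one]

lemma prodCongr_mem_kClosure_range_inducedPermHom {k : ℕ} (hH : H ≤ Subgroup.center G)
    {x : Equiv.Perm Ω} (hx : x ∈ kClosure k φ.range) :
    (Equiv.refl (G ⧸ H)).prodCongr x ∈ kClosure k (inducedPermHom φ).range := by
  intro α
  obtain ⟨_, ⟨z, rfl⟩, hxz⟩ := hx (Prod.snd ∘ α)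
  refine ⟨inducedPermHom φ z, ⟨z, rfl⟩, fun i => ?_⟩
  rw [inducedPermHom_apply_of_mem_center φ z (hH z.2)]
  exact Prod.ext rfl (hxz i)

end Induced

theorem center_totallyKClosed_general (k : ℕ) (G : Type*) [Group G] [Finite G]
    (h : IsTotallyKClosed k G) : IsTotallyKClosed k ↥(Subgroup.center G) := by
  intro Ω _ φ hφ
  cases isEmpty_or_nonempty Ω
  · exact Subsingleton.elim _ _ -- `Equiv.Perm Ω` is trivial
  refine le_antisymm (fun x hx => ?_) (le_kClosure _)
  have hlift := prodCongr_mem_kClosure_range_inducedPermHom le_rfl hx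
  rw [h.kClosure_range_eq _ (inducedPermHom_injective le_rfl hφ)] at hlift
  obtain ⟨g, hg⟩ := hlift
  obtain ⟨z, -, hz⟩ := exists_eq_of_inducedPermHom_eq_prodCongr le_rfl hg
  exact ⟨z, hz⟩

/-- The center of a finite totally `k`-closed group is totally `k`-closed. -/
theorem center_totallyKClosed (k : ℕ) (hk : 1 ≤ k) (G : Type*) [Group G] [Finite G]
    (h : IsTotallyKClosed k G) : IsTotallyKClosed k ↥(Subgroup.center G) :=
  center_totallyKClosed_general k G h
end

section
/- Let G be a finite nilpotent subgroup of Sym(Ω) for a finite set Ω, let k ≥ 2, let p be a prime dividing |G^{(k),Ω}|, let P be a Sylow p-subgroup of G, and let Q be a Sylow p-subgroup of G^{(k),Ω}. Then P^{(k),Ω} = Q. -/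
/-!
`P^{(k)}` lies in `G^{(k)}`, is a `p`-group and contains every `p`-element of `G^{(k)}`, so it is
the Sylow `p`-subgroup `Q`. Everything rests on one fact: if `K` is nilpotent, an element `x` of
`K^{(2)}` whose order is coprime to `|K|` is trivial. To see it, pick a central `c ≠ 1` in `K`; the
`⟨c⟩`-orbits form a `K`-invariant partition with fewer blocks than points, so by induction on `|Ω|`
the induced permutation of the blocks is trivial; on each block `x` then acts as a power of `c`,
whose order divides `|K|`.
For a `p`-element `x` of `G^{(2)}` the same fact, applied to the action of `G` on the `P`-orbits
(a `p'`-group, since `P` acts trivially), shows that `x` moves points only inside `P`-orbits. If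
`g ∈ G` agrees with `x` on a `k`-tuple, write `g = s t` with `s ∈ P` and `t` a `p'`-element, which
centralizes `P`. For a point `α` of the tuple pick `h ∈ P` with `h α = x α`; then `t` is a power of
`h⁻¹ g`, so it fixes `α`, and `s ∈ P` agrees with `x` on the whole tuple.
-/

open Equiv MulAction Subgroup

section GroupTheory

variable {G : Type*} [Group G]

theorem exists_eq_mul_of_pow_mul_eq_one {g : G} {a b : ℕ} (hab : a.Coprime b)
    (h : g ^ (a * b) = 1) : ∃ s t : G, g = s * t ∧ s ^ a = 1 ∧ t ^ b = 1 := by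
  have hbez := Nat.gcd_eq_gcd_ab a b
  rw [hab.gcd_eq_one, Nat.cast_one] at hbez
  have hkill : ∀ m : ℤ, (g ^ ((a * b : ℕ) * m)) = 1 := fun m => by
    rw [zpow_mul, zpow_natCast, h, one_zpow]
  refine ⟨g ^ ((b : ℤ) * a.gcdB b), g ^ ((a : ℤ) * a.gcdA b), ?_, ?_, ?_⟩
  · rw [← zpow_add, add_comm, ← hbez, zpow_one]
  · rw [← zpow_natCast, ← zpow_mul, ← hkill (a.gcdB b)]
    push_cast
    ring_nf
  · rw [← zpow_natCast, ← zpow_mul, ← hkill (a.gcdA b)]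
    push_cast
    ring_nf

theorem Commute.exists_mul_pow_eq_right {v t : G} (h : Commute v t) {n : ℕ} (hv : v ^ n = 1)
    (hn : n.Coprime (orderOf t)) : ∃ m : ℕ, (v * t) ^ m = t := by
  obtain ⟨c, hc⟩ := exists_pow_eq_self_of_coprime hn
  exact ⟨n * c, by rw [pow_mul, h.mul_pow, hv, one_mul, hc]⟩

theorem exists_eq_mul_pow_prime_pow_eq_one [Finite G] (p : ℕ) [Fact p.Prime] (g : G) :
    ∃ s t : G, g = s * t ∧ s ^ p ^ (orderOf g).factorization p = 1 ∧ ¬ p ∣ orderOf t := by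
  have hp : p.Prime := Fact.out
  have he : orderOf g ≠ 0 := (orderOf_pos g).ne'
  obtain ⟨s, t, hst, hs, ht⟩ := exists_eq_mul_of_pow_mul_eq_one
    ((Nat.coprime_ordCompl hp he).pow_left _)
    (by rw [Nat.ordProj_mul_ordCompl_eq_self, pow_orderOf_eq_one])
  exact ⟨s, t, hst, hs, fun h =>
    Nat.not_dvd_ordCompl hp he (h.trans (orderOf_dvd_of_pow_eq_one ht))⟩

theorem Sylow.map_subtype_eq_of_le {p : ℕ} {H : Subgroup G}
    (Q : Sylow p H) {R : Subgroup G} (hR : IsPGroup p R)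
    (hQR : (Q : Subgroup H).map H.subtype ≤ R) (hRH : R ≤ H) :
    (Q : Subgroup H).map H.subtype = R := by
  have hQ : (Q : Subgroup H) = R.comap H.subtype :=
    (Q.is_maximal' (hR.comap_of_injective _ H.subtype_injective)
      (map_le_iff_le_comap.mp hQR)).symm
  rw [hQ, map_comap_eq_self (by rwa [range_subtype])]

variable [Finite G] [Group.IsNilpotent G] {p : ℕ} [Fact p.Prime]

theorem Sylow.mem_of_pow_eq_one (P : Sylow p G) {g : G} {a : ℕ} (hg : g ^ p ^ a = 1) :
    g ∈ P := by
  have : Unique (Sylow p G) := Sylow.unique_of_normal P inferInstance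
  have hpg : IsPGroup p (zpowers g) := by
    obtain ⟨k, -, hk⟩ := (Nat.dvd_prime_pow Fact.out).mp (orderOf_dvd_of_pow_eq_one hg)
    exact IsPGroup.of_card (by rw [Nat.card_zpowers, hk])
  obtain ⟨Q, hQ⟩ := hpg.exists_le_sylow
  exact Subsingleton.elim Q P ▸ hQ (mem_zpowers g)

theorem Sylow.mem_centralizer_of_not_dvd_orderOf (P : Sylow p G) {t : G}
    (ht : ¬ p ∣ orderOf t) : t ∈ centralizer (P : Set G) := by
  -- Sylow `r`-subgroups with `r ≠ p` centralize `P`, so the centralizer has `p`-power index.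
  have hidx : ∀ r, r.Prime → r ≠ p → ¬ r ∣ (centralizer (P : Set G)).index := by
    intro r hr hrp
    have := Fact.mk hr
    obtain ⟨R⟩ : Nonempty (Sylow r G) := inferInstance
    have hRP : Disjoint (R : Subgroup G) P :=
      IsPGroup.disjoint_of_ne r p hrp _ _ R.isPGroup' P.isPGroup'
    have hR : (R : Subgroup G) ≤ centralizer (P : Set G) := fun x hx =>
      mem_centralizer_iff.mpr fun y hy =>
        (commute_of_normal_of_disjoint _ _ inferInstance inferInstance hRP x y hx hy).symm.eq
    exact fun h => R.not_dvd_index (h.trans (index_dvd_of_le hR))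
  have hco : (orderOf t).Coprime (centralizer (P : Set G)).index :=
    Nat.coprime_of_dvd fun r hr hrt hri => by
      rcases eq_or_ne r p with rfl | hrp
      exacts [ht hrt, hidx r hr hrp hri]
  have : (centralizer (P : Set G)).Normal := normal_centralizer (H := (P : Subgroup G))
  rw [← QuotientGroup.eq_one_iff, ← orderOf_eq_one_iff]
  exact Nat.eq_one_of_dvd_coprimes hco (orderOf_map_dvd (QuotientGroup.mk' _) t)
    (orderOf_dvd_natCard _)

theorem Sylow.exists_eq_mul_mem_centralizer (P : Sylow p G) (g : G) :
    ∃ s ∈ (P : Subgroup G), ∃ t ∈ centralizer (P : Set G),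
      ¬ p ∣ orderOf t ∧ g = s * t := by
  obtain ⟨s, t, rfl, hs, ht⟩ := exists_eq_mul_pow_prime_pow_eq_one p g
  exact ⟨s, P.mem_of_pow_eq_one hs, t, P.mem_centralizer_of_not_dvd_orderOf ht, ht, rfl⟩

end GroupTheory

section

variable {Ω : Type*}

theorem mem_kClosure_two_iff {K : Subgroup (Perm Ω)} {x : Perm Ω} :
    x ∈ kClosure 2 K ↔ ∀ β γ : Ω, ∃ g ∈ K, g β = x β ∧ g γ = x γ := by
  refine ⟨fun hx β γ => ?_, fun h α => ?_⟩
  · obtain ⟨g, hg, hxg⟩ := hx ![β, γ]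
    exact ⟨g, hg, (hxg 0).symm, (hxg 1).symm⟩
  · obtain ⟨g, hg, h0, h1⟩ := h (α 0) (α 1)
    refine ⟨g, hg, fun i => ?_⟩
    fin_cases i
    exacts [h0.symm, h1.symm]

theorem kClosure_mono {k : ℕ} {K L : Subgroup (Perm Ω)} (h : K ≤ L) :
    kClosure k K ≤ kClosure k L := fun _ hx α =>
  let ⟨g, hg, hxg⟩ := hx α
  ⟨g, h hg, hxg⟩

theorem kClosure_le_kClosure_of_le {j k : ℕ} (hjk : j ≤ k) (K : Subgroup (Perm Ω)) :
    kClosure k K ≤ kClosure j K := by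
  intro x hx α
  rcases Nat.eq_zero_or_pos j with rfl | hj
  · exact ⟨1, K.one_mem, fun i => i.elim0⟩
  obtain ⟨g, hg, hxg⟩ := hx fun i => α ⟨min i (j - 1), by omega⟩
  refine ⟨g, hg, fun i => ?_⟩
  have hi : (⟨min (i : ℕ) (j - 1), by omega⟩ : Fin j) = i := Fin.ext (min_eq_left (by omega))
  simpa only [Fin.val_mk, hi] using hxg ⟨i, by omega⟩

theorem kClosure_bot {k : ℕ} (hk : k ≠ 0) : kClosure k (⊥ : Subgroup (Perm Ω)) = ⊥ := by
  refine eq_bot_iff.mpr fun x hx => mem_bot.mpr (Perm.ext fun β => ?_)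
  obtain ⟨g, hg, hxg⟩ := hx fun _ => β
  rw [mem_bot] at hg
  simpa [hg] using hxg ⟨0, Nat.pos_of_ne_zero hk⟩

namespace Setoid

variable (s : Setoid Ω)

def permStabilizer : Subgroup (Perm Ω) where
  carrier := {σ | ∀ a b, s (σ a) (σ b) ↔ s a b}
  one_mem' _ _ := Iff.rfl
  mul_mem' hσ hτ a b := (hσ _ _).trans (hτ a b)
  inv_mem' {σ} hσ a b := by simpa using (hσ (σ⁻¹ a) (σ⁻¹ b)).symm

def quotientPerm : s.permStabilizer →* Perm (Quotient s) where
  toFun σ := Quotient.congr σ fun a b => (σ.2 a b).symm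
  map_one' := Perm.ext fun q => Quotient.inductionOn q fun _ => rfl
  map_mul' _ _ := Perm.ext fun q => Quotient.inductionOn q fun _ => rfl

@[simp]
theorem quotientPerm_mk (σ : s.permStabilizer) (a : Ω) :
    s.quotientPerm σ ⟦a⟧ = ⟦(σ : Perm Ω) a⟧ := rfl

theorem quotientPerm_eq_one_iff (σ : s.permStabilizer) :
    s.quotientPerm σ = 1 ↔ ∀ a, s ((σ : Perm Ω) a) a := by
  refine ⟨fun h a => Quotient.exact (by rw [← quotientPerm_mk, h]; rfl), fun h => ?_⟩
  exact Perm.ext fun q => Quotient.inductionOn q fun a => Quotient.sound (h a)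

theorem orderOf_quotientPerm_dvd (σ : s.permStabilizer) :
    orderOf (s.quotientPerm σ) ∣ orderOf (σ : Perm Ω) :=
  (orderOf_map_dvd _ σ).trans (orderOf_submonoid σ).symm.dvd

variable {s}

theorem kClosure_two_le_permStabilizer {K : Subgroup (Perm Ω)} (hK : K ≤ s.permStabilizer) :
    kClosure 2 K ≤ s.permStabilizer := by
  intro x hx a b
  obtain ⟨g, hg, hga, hgb⟩ := mem_kClosure_two_iff.mp hx a b
  rw [← hga, ← hgb]
  exact hK hg a b

theorem quotientPerm_mem_kClosure_two {K : Subgroup (Perm Ω)} (hK : K ≤ s.permStabilizer)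
    {x : Perm Ω} (hx : x ∈ kClosure 2 K) :
    s.quotientPerm ⟨x, kClosure_two_le_permStabilizer hK hx⟩ ∈
      kClosure 2 (s.quotientPerm.comp (inclusion hK)).range := by
  refine mem_kClosure_two_iff.mpr fun b c => ?_
  induction b using Quotient.inductionOn with | h b =>
  induction c using Quotient.inductionOn with | h c =>
  obtain ⟨g, hg, hgb, hgc⟩ := mem_kClosure_two_iff.mp hx b c
  exact ⟨_, ⟨⟨g, hg⟩, rfl⟩, congrArg _ hgb, congrArg _ hgc⟩

end Setoid

theorem normalizer_le_permStabilizer_orbitRel (N : Subgroup (Perm Ω)) :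
    normalizer (N : Set (Perm Ω)) ≤ (orbitRel N Ω).permStabilizer := by
  suffices h : ∀ σ ∈ normalizer (N : Set (Perm Ω)), ∀ a b,
      orbitRel N Ω a b → orbitRel N Ω (σ a) (σ b) by
    intro σ hσ a b
    refine ⟨fun hab => ?_, h σ hσ a b⟩
    simpa using h σ⁻¹ (inv_mem hσ) _ _ hab
  rintro σ hσ a b ⟨⟨n, hn⟩, rfl⟩
  refine ⟨⟨σ * n * σ⁻¹, (mem_normalizer_iff.mp hσ n).mp hn⟩, ?_⟩
  simp [Subgroup.smul_def, Perm.smul_def]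

theorem card_quotient_orbitRel_lt [Finite Ω] {N : Subgroup (Perm Ω)} (hN : N ≠ ⊥) :
    Nat.card (orbitRel.Quotient N Ω) < Nat.card Ω := by
  have : Fintype Ω := Fintype.ofFinite Ω
  have : Fintype (orbitRel.Quotient N Ω) := Fintype.ofFinite _
  obtain ⟨n, hn⟩ := ne_bot_iff_exists_ne_one.mp hN
  obtain ⟨β, hβ⟩ : ∃ β, (n : Perm Ω) β ≠ β := by
    by_contra! h
    exact hn (Subtype.ext (Perm.ext h))
  simp only [Nat.card_eq_fintype_card]
  refine Fintype.card_lt_of_surjective_not_injective _ Quotient.mk_surjective fun hinj => hβ ?_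
  exact hinj (Quotient.sound ⟨n, rfl⟩)

theorem apply_eq_self_of_mem_kClosure_two {K : Subgroup (Perm Ω)} {z x : Perm Ω}
    (hz : ∀ g ∈ K, Commute g z) (hx : x ∈ kClosure 2 K)
    (hco : (orderOf z).Coprime (orderOf x))
    {β : Ω} {i : ℤ} (hβ : x β = (z ^ i) β) : x β = β := by
  have hlocal : ∀ j : ℤ, x ((z ^ j) β) = (z ^ i) ((z ^ j) β) := fun j => by
    obtain ⟨g, hg, hgβ, hgγ⟩ := mem_kClosure_two_iff.mp hx β ((z ^ j) β)
    calc x ((z ^ j) β) = (g * z ^ j) β := hgγ.symm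
      _ = (z ^ j * z ^ i) β := by
        rw [((hz g hg).zpow_right j).eq, Perm.mul_apply, Perm.mul_apply, hgβ, hβ]
      _ = (z ^ i) ((z ^ j) β) := by rw [(Commute.zpow_zpow_self z j i).eq, Perm.mul_apply]
  have hpow : ∀ n : ℕ, (x ^ n) β = (z ^ (n * i)) β := by
    intro n
    induction n with
    | zero => simp
    | succ n ih =>
      rw [pow_succ', Perm.mul_apply, ih, hlocal, ← Perm.mul_apply, ← zpow_add]
      congr 2
      push_cast
      ring
  have hfix : (x ^ orderOf z) β = β := by
    rw [hpow, zpow_mul, zpow_natCast, pow_orderOf_eq_one, one_zpow, Perm.one_apply]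
  obtain ⟨m, hm⟩ := exists_pow_eq_self_of_coprime hco
  rw [← hm]
  exact Perm.pow_apply_eq_self_of_apply_eq_self hfix m

theorem eq_one_of_mem_kClosure_two_of_coprime [Finite Ω] {K : Subgroup (Perm Ω)}
    [Group.IsNilpotent K] {x : Perm Ω} (hx : x ∈ kClosure 2 K)
    (hco : (orderOf x).Coprime (Nat.card K)) : x = 1 := by
  induction hn : Nat.card Ω using Nat.strong_induction_on generalizing Ω with
  | _ n ih =>
  obtain rfl | hK := eq_or_ne K ⊥
  · rwa [kClosure_bot two_ne_zero, mem_bot] at hx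
  obtain ⟨c, hcK, hc, hc1⟩ : ∃ c ∈ K, (∀ g ∈ K, Commute g c) ∧ c ≠ 1 := by
    have : Nontrivial K := (nontrivial_iff_ne_bot K).mpr hK
    obtain ⟨⟨z, hz⟩, hz1⟩ := ne_bot_iff_exists_ne_one.mp (Group.IsNilpotent.center_ne_bot K)
    exact ⟨z, z.2, fun g hg => congrArg Subtype.val (mem_center_iff.mp hz ⟨g, hg⟩),
      fun h => hz1 (Subtype.ext (Subtype.ext h))⟩
  have hco' : (orderOf c).Coprime (orderOf x) :=
    (hco.coprime_dvd_right (orderOf_mk c hcK ▸ orderOf_dvd_natCard _)).symm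
  set N := zpowers c
  have hKs : K ≤ (orbitRel N Ω).permStabilizer := by
    refine le_trans ?_
      ((centralizer_le_normalizer _).trans (normalizer_le_permStabilizer_orbitRel N))
    rw [le_centralizer_iff, zpowers_le]
    exact fun g hg => (hc g hg).eq
  set φ := (orbitRel N Ω).quotientPerm.comp (inclusion hKs)
  have : Group.IsNilpotent φ.range := Group.nilpotent_of_surjective _ φ.rangeRestrict_surjective
  have hxs := Setoid.kClosure_two_le_permStabilizer hKs hx
  have hcoφ : (orderOf ((orbitRel N Ω).quotientPerm ⟨x, hxs⟩)).Coprime (Nat.card φ.range) :=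
    (hco.coprime_dvd_left (Setoid.orderOf_quotientPerm_dvd _ _)).coprime_dvd_right
      (card_range_dvd φ)
  have hquot := ih _ (hn ▸ card_quotient_orbitRel_lt (zpowers_ne_bot.mpr hc1))
    (Setoid.quotientPerm_mem_kClosure_two hKs hx) hcoφ rfl
  ext β
  obtain ⟨⟨_, i, rfl⟩, hi⟩ := (Setoid.quotientPerm_eq_one_iff _ _).mp hquot β
  exact apply_eq_self_of_mem_kClosure_two hc hx hco' hi.symm


theorem IsPGroup.kClosure [Finite Ω] {p : ℕ} [Fact p.Prime] {P : Subgroup (Perm Ω)}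
    (hP : IsPGroup p P) {k : ℕ} (hk : 2 ≤ k) : IsPGroup p (kClosure k P) := by
  have := hP.isNilpotent
  obtain ⟨n, hn⟩ := IsPGroup.iff_card.mp hP
  intro x
  obtain ⟨s, t, rfl, hs, ht⟩ := exists_eq_mul_pow_prime_pow_eq_one p x
  have ht1 : t = 1 := Subtype.ext <| eq_one_of_mem_kClosure_two_of_coprime
    (kClosure_le_kClosure_of_le hk P t.2) <| by
      rw [hn, orderOf_submonoid]
      exact Nat.Coprime.pow_right n ((Nat.Prime.coprime_iff_not_dvd Fact.out).mpr ht).symm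
  exact ⟨_, by rw [ht1, mul_one, hs]⟩

section Sylow

variable [Finite Ω] {G : Subgroup (Perm Ω)} [Group.IsNilpotent G] {p : ℕ} [Fact p.Prime]

theorem exists_mem_sylow_apply_eq (P : Sylow p G) {x : Perm Ω} (hx : x ∈ kClosure 2 G)
    {a : ℕ} (hxp : x ^ p ^ a = 1) (β : Ω) :
    ∃ h ∈ (P : Subgroup G), (h : Perm Ω) β = x β := by
  set N := (P : Subgroup G).map G.subtype
  have hGs : G ≤ (orbitRel N Ω).permStabilizer := by
    refine le_trans ?_
      ((le_normalizer_map G.subtype).trans (normalizer_le_permStabilizer_orbitRel N))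
    rw [normalizer_eq_top_iff.mpr inferInstance, ← MonoidHom.range_eq_map, range_subtype]
  set φ := (orbitRel N Ω).quotientPerm.comp (inclusion hGs)
  have hPφ : (P : Subgroup G) ≤ φ.ker := fun h hh =>
    (Setoid.quotientPerm_eq_one_iff _ _).mpr fun _ => ⟨⟨h, mem_map_of_mem _ hh⟩, rfl⟩
  have hpφ : ¬ p ∣ Nat.card φ.range := by
    rw [← index_ker]
    exact fun h => P.not_dvd_index (h.trans (index_dvd_of_le hPφ))
  have : Group.IsNilpotent φ.range := Group.nilpotent_of_surjective _ φ.rangeRestrict_surjective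
  have hquot := eq_one_of_mem_kClosure_two_of_coprime
    (Setoid.quotientPerm_mem_kClosure_two hGs hx) <|
    (Nat.Coprime.pow_left a ((Nat.Prime.coprime_iff_not_dvd Fact.out).mpr hpφ)).coprime_dvd_left
      ((Setoid.orderOf_quotientPerm_dvd _ _).trans (orderOf_dvd_of_pow_eq_one hxp))
  obtain ⟨⟨_, h, hh, rfl⟩, hβ⟩ := (Setoid.quotientPerm_eq_one_iff _ _).mp hquot β
  exact ⟨h, hh, hβ⟩

theorem mem_kClosure_map_sylow (P : Sylow p G) {k : ℕ} (hk : 2 ≤ k) {x : Perm Ω}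
    (hx : x ∈ kClosure k G) {a : ℕ} (hxp : x ^ p ^ a = 1) :
    x ∈ kClosure k ((P : Subgroup G).map G.subtype) := by
  intro α
  obtain ⟨g, hg, hxg⟩ := hx α
  obtain ⟨s, hs, t, ht, hpt, hst⟩ := P.exists_eq_mul_mem_centralizer ⟨g, hg⟩
  refine ⟨s, mem_map_of_mem _ hs, fun i => ?_⟩
  obtain ⟨h, hh, hhx⟩ :=
    exists_mem_sylow_apply_eq P (kClosure_le_kClosure_of_le hk G hx) hxp (α i)
  have hv : h⁻¹ * s ∈ (P : Subgroup G) := mul_mem (inv_mem hh) hs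
  obtain ⟨b, hb⟩ := P.isPGroup' ⟨_, hv⟩
  obtain ⟨m, hm⟩ := Commute.exists_mul_pow_eq_right (mem_centralizer_iff.mp ht _ hv)
    (congrArg Subtype.val hb)
    (Nat.Coprime.pow_left b ((Nat.Prime.coprime_iff_not_dvd Fact.out).mpr hpt))
  have hfix : ((h⁻¹ * s * t : G) : Perm Ω) (α i) = α i := by
    rw [mul_assoc, ← hst]
    simp [← hxg i, ← hhx]
  have htfix : (t : Perm Ω) (α i) = α i := by
    rw [← hm, coe_pow]
    exact Perm.pow_apply_eq_self_of_apply_eq_self hfix m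
  rw [hxg i, show g = (s : Perm Ω) * t from congrArg Subtype.val hst, Perm.mul_apply, htfix]

end Sylow

end

theorem kClosure_sylow_eq_general (Ω : Type*) [Finite Ω] (G : Subgroup (Equiv.Perm Ω))
    (hnil : Group.IsNilpotent ↥G) (k : ℕ) (hk : 2 ≤ k) (p : ℕ) (hp : p.Prime)
    (P : Sylow p ↥G) (Q : Sylow p ↥(kClosure k G)) :
    kClosure k (Subgroup.map G.subtype ↑P) =
      Subgroup.map (kClosure k G).subtype ↑Q := by
  have := Fact.mk hp
  refine (Q.map_subtype_eq_of_le ((P.isPGroup'.map G.subtype).kClosure hk) ?_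
    (kClosure_mono (map_subtype_le _))).symm
  rintro _ ⟨y, hy, rfl⟩
  obtain ⟨a, ha⟩ := Q.isPGroup' ⟨y, hy⟩
  exact mem_kClosure_map_sylow P hk y.2 (by simpa [Subtype.ext_iff] using ha)

/-- If `G` is a finite nilpotent permutation group, `k ≥ 2`, `p` a prime dividing the
order of the `k`-closure, `P` a Sylow `p`-subgroup of `G` and `Q` a Sylow `p`-subgroup of
the `k`-closure, then the `k`-closure of `P` equals `Q`. -/
theorem kClosure_sylow_eq (Ω : Type*) [Finite Ω] (G : Subgroup (Equiv.Perm Ω))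
    (hnil : Group.IsNilpotent ↥G) (k : ℕ) (hk : 2 ≤ k) (p : ℕ) (hp : p.Prime)
    (hdvd : p ∣ Nat.card ↥(kClosure k G)) (P : Sylow p ↥G) (Q : Sylow p ↥(kClosure k G)) :
    kClosure k (Subgroup.map G.subtype ↑P) =
      Subgroup.map (kClosure k G).subtype ↑Q :=
  kClosure_sylow_eq_general Ω G hnil k hk p hp P Q
end

section
/- Let G be a finite nilpotent subgroup of Sym(Ω) for a finite set Ω, let p be a prime, and let P be a Sylow p-subgroup of G. Let Δ_1, …, Δ_k be orbits of P on Ω, let Δ = Δ_1 ∪ ⋯ ∪ Δ_k, and let L be the subgroup of G consisting of all elements fixing each Δ_i setwise. Then the permutation group induced by L on Δ equals the permutation group induced by P on Δ, i.e., L^Δ = P^Δ as subgroups of Sym(Δ). -/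
/-!
Write `g ∈ L` as `g = x y` with `x` its `p`-part and `y` its `p'`-part. Since `G` is nilpotent,
`P` is its unique Sylow `p`-subgroup, so `x ∈ P`, and `y` commutes with `P`. Then `y` stabilizes
each orbit `Δᵢ = P ω`, say `y ω = z ω` with `z ∈ P`; commuting with `P`, `y ^ n ω = z ^ n ω` for
all `n`, so `ω` is fixed by a `p`-power of `y` and by a `p'`-power, hence by `y`. Thus `g` agrees
with `x ∈ P` on `Δ`; the converse inclusion holds because `P` preserves its own orbits.
-/

open MulAction

theorem IsPGroup.eq_one_of_pow_eq_one_of_coprime {p : ℕ} {Q : Type*} [Group Q]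
    (hQ : IsPGroup p Q) {z : Q} {n : ℕ} (hn : p.Coprime n) (hz : z ^ n = 1) : z = 1 :=
  orderOf_eq_one_iff.mp ((hQ.orderOf_coprime hn z).eq_one_of_dvd (orderOf_dvd_of_pow_eq_one hz))

theorem exists_mul_eq_of_pow_mul_eq_one {G : Type*} [Group G] {g : G} {n m : ℕ}
    (hnm : n.Coprime m) (hg : g ^ (n * m) = 1) : ∃ x y : G, g = x * y ∧ x ^ n = 1 ∧ y ^ m = 1 := by
  have hbezout : (1 : ℤ) = m * Nat.gcdB n m + n * Nat.gcdA n m := by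
    have := Nat.gcd_eq_gcd_ab n m
    rw [hnm.gcd_eq_one, Nat.cast_one] at this
    linarith
  have hg' : g ^ ((n * m : ℕ) : ℤ) = 1 := by rw [zpow_natCast, hg]
  refine ⟨g ^ ((m : ℤ) * Nat.gcdB n m), g ^ ((n : ℤ) * Nat.gcdA n m), ?_, ?_, ?_⟩
  · rw [← zpow_add, ← hbezout, zpow_one]
  · rw [← zpow_natCast, ← zpow_mul, mul_comm, ← mul_assoc, ← Nat.cast_mul, zpow_mul, hg', one_zpow]
  · rw [← zpow_natCast, ← zpow_mul, mul_right_comm, ← Nat.cast_mul, zpow_mul, hg', one_zpow]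

theorem smul_eq_self_of_commute_of_coprime {M X : Type*} [Group M] [MulAction M X] {p : ℕ}
    {P : Subgroup M} (hP : IsPGroup p P) {y : M} (hy : ∀ z ∈ P, Commute y z) {m : ℕ}
    (hm : y ^ m = 1) (hpm : p.Coprime m) {ω : X} (hω : y • ω ∈ orbit P ω) : y • ω = ω := by
  obtain ⟨⟨z, hzP⟩, hz : z • ω = y • ω⟩ := hω
  obtain ⟨c, hc⟩ := hP ⟨z, hzP⟩
  -- `y` moves `ω` like the `p`-element `z`, so `y ^ p ^ c` fixes `ω`, as does `y ^ m`.
  have hzu : Commute z (z⁻¹ * y) := (Commute.refl z).inv_right.mul_right (hy z hzP).symm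
  have hfix : z⁻¹ * y ∈ stabilizer M ω := by
    rw [mem_stabilizer_iff, mul_smul, ← hz, inv_smul_smul]
  have hpow : ∀ n, y ^ n • ω = z ^ n • ω := fun n => by
    rw [show y = z * (z⁻¹ * y) by group, hzu.mul_pow, mul_smul,
      mem_stabilizer_iff.mp (pow_mem hfix n)]
  have hperiod_p : Function.IsPeriodicPt (y • ·) (p ^ c) ω := by
    simp only [Function.IsPeriodicPt, Function.IsFixedPt, smul_iterate]
    rw [hpow, show z ^ p ^ c = 1 from congrArg Subtype.val hc, one_smul]
  have hperiod_m : Function.IsPeriodicPt (y • ·) m ω := by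
    simp only [Function.IsPeriodicPt, Function.IsFixedPt, smul_iterate, hm, one_smul]
  simpa [(hpm.pow_left c).gcd_eq_one, Function.IsPeriodicPt, Function.IsFixedPt] using
    hperiod_p.gcd hperiod_m

section Nilpotent

variable {K : Type*} [Group K] [Finite K] [Group.IsNilpotent K]

theorem commute_of_pow_eq_one_of_coprime {x y : K} {n m : ℕ} (hx : x ^ n = 1) (hy : y ^ m = 1)
    (hnm : n.Coprime m) : Commute x y := by
  obtain ⟨e⟩ := (Group.isNilpotent_of_finite_tfae.out 0 4).mp ‹Group.IsNilpotent K›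
  have hcomp : ∀ {z : K} {k : ℕ}, z ^ k = 1 → ∀ q Q, e.symm z q Q ^ k = 1 := fun hz q Q => by
    simpa using congrFun (congrFun (show e.symm _ ^ _ = 1 by rw [← map_pow, hz, map_one]) q) Q
  have hsupport : ∀ q Q, e.symm x q Q = 1 ∨ e.symm y q Q = 1 := fun q Q => by
    have hq := Nat.prime_of_mem_primeFactors q.2
    by_cases hqn : (q : ℕ) ∣ n
    · exact .inr (Q.isPGroup'.eq_one_of_pow_eq_one_of_coprime
        (Nat.Coprime.coprime_dvd_left hqn hnm) (hcomp hy q Q))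
    · exact .inl (Q.isPGroup'.eq_one_of_pow_eq_one_of_coprime
        ((Nat.Prime.coprime_iff_not_dvd hq).2 hqn) (hcomp hx q Q))
  have h : Commute (e.symm x) (e.symm y) := by
    show _ = _
    funext q Q
    rcases hsupport q Q with h | h <;> simp [h]
  simpa using h.map e.toMonoidHom

theorem Sylow.mem_of_pow_prime_pow_eq_one {p : ℕ} [Fact p.Prime] (P : Sylow p K) {x : K} {a : ℕ}
    (hx : x ^ p ^ a = 1) : x ∈ P := by
  have hx : IsPGroup p (Subgroup.zpowers x) :=
    .of_card_dvd_pow (by rw [Nat.card_zpowers]; exact orderOf_dvd_of_pow_eq_one hx)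
  obtain ⟨Q, hQ⟩ := hx.exists_le_sylow
  have := Sylow.unique_of_normal P inferInstance
  exact Subsingleton.elim Q P ▸ hQ (Subgroup.mem_zpowers x)

theorem Sylow.exists_mem_smul_eq_smul_of_mem_orbit {X : Type*} [MulAction K X] {p : ℕ}
    [hp : Fact p.Prime] (P : Sylow p K) (g : K) :
    ∃ x ∈ P, ∀ ω : X, g • ω ∈ orbit P ω → g • ω = x • ω := by
  set a := (orderOf g).factorization p
  set m := orderOf g / p ^ a
  have hpm : p.Coprime m := Nat.coprime_ordCompl hp.out (orderOf_pos g).ne'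
  obtain ⟨x, y, hg, hx, hy⟩ := exists_mul_eq_of_pow_mul_eq_one (hpm.pow_left a)
    (by rw [Nat.ordProj_mul_ordCompl_eq_self, pow_orderOf_eq_one])
  have hxP : x ∈ P := P.mem_of_pow_prime_pow_eq_one hx
  have hyP : ∀ z ∈ (P : Subgroup K), Commute y z := fun z hz => by
    obtain ⟨c, hc⟩ := P.isPGroup' ⟨z, hz⟩
    exact (commute_of_pow_eq_one_of_coprime (congrArg Subtype.val hc) hy (hpm.pow_left c)).symm
  refine ⟨x, hxP, fun ω hω => ?_⟩
  have hyω : y • ω ∈ orbit P ω := by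
    obtain ⟨z, hz : z • ω = g • ω⟩ := hω
    refine ⟨⟨x, hxP⟩⁻¹ * z, ?_⟩
    change (⟨x, hxP⟩⁻¹ * z : P) • ω = y • ω
    rw [mul_smul, hz, hg, Subgroup.smul_def, mul_smul]
    exact inv_smul_smul x _
  rw [hg, mul_smul, smul_eq_self_of_commute_of_coprime P.isPGroup' hyP hy hpm hyω]

end Nilpotent

theorem MulAction.mem_orbit_map_subtype_iff {M X : Type*} [Group M] [MulAction M X]
    {K : Subgroup M} {H : Subgroup K} {a b : X} :
    a ∈ orbit (H.map K.subtype) b ↔ a ∈ orbit H b := by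
  constructor
  · rintro ⟨⟨_, h, hh, rfl⟩, rfl⟩
    exact ⟨⟨h, hh⟩, rfl⟩
  · rintro ⟨h, rfl⟩
    exact ⟨⟨h, h, h.2, rfl⟩, rfl⟩

/-- If `G ≤ Sym(Ω)` is finite nilpotent, `P` a Sylow `p`-subgroup of `G`, `Δ₁, …, Δ_k`
orbits of `P`, `Δ` their union and `L` the set of elements of `G` fixing each `Δᵢ`
setwise, then the permutation group induced by `L` on `Δ` equals that induced by `P`. -/
theorem induced_group_eq_sylow_induced {Ω : Type*} [Finite Ω] (G : Subgroup (Equiv.Perm Ω))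
    (hnil : Group.IsNilpotent ↥G) (p : ℕ) (hp : p.Prime) (P : Sylow p ↥G)
    (k : ℕ) (Δi : Fin k → Set Ω)
    (horb : ∀ i, ∃ α : Ω, Δi i = MulAction.orbit ↥(Subgroup.map G.subtype ↑P) α)
    (Δ : Set Ω) (hΔ : Δ = ⋃ i, Δi i) :
    {σ : Equiv.Perm ↥Δ | ∃ g ∈ G, (∀ i, ⇑g '' Δi i = Δi i) ∧ ∀ a : ↥Δ, (σ a : Ω) = g a}
      = {σ : Equiv.Perm ↥Δ |
          ∃ g ∈ Subgroup.map G.subtype ↑P, ∀ a : ↥Δ, (σ a : Ω) = g a} := by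
  have := Fact.mk hp
  have horb' : ∀ i, ∀ ω ∈ Δi i, Δi i = orbit (Subgroup.map G.subtype ↑P) ω := fun i ω hω => by
    obtain ⟨α, hα⟩ := horb i
    rw [hα] at hω ⊢
    exact (orbit_eq_iff.mpr hω).symm
  ext σ
  constructor
  · rintro ⟨g, hg, hfix, hσ⟩
    obtain ⟨x, hxP, hx⟩ := P.exists_mem_smul_eq_smul_of_mem_orbit (X := Ω) ⟨g, hg⟩
    refine ⟨x, ⟨x, hxP, rfl⟩, fun a => (hσ a).trans (hx a ?_)⟩
    obtain ⟨i, hi⟩ := Set.mem_iUnion.mp (hΔ ▸ a.2 : (a : Ω) ∈ ⋃ i, Δi i)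
    rw [← mem_orbit_map_subtype_iff, ← horb' i a hi, ← hfix i]
    exact Set.mem_image_of_mem g hi
  · rintro ⟨g, hg, hσ⟩
    refine ⟨g, Subgroup.map_subtype_le _ hg, fun i => ?_, hσ⟩
    obtain ⟨α, hα⟩ := horb i
    rw [hα]
    exact smul_orbit (⟨g, hg⟩ : Subgroup.map G.subtype ↑P) α
end

section
/- Let G be a finite nilpotent group acting transitively and faithfully on a finite set Ω with |Ω| = n, and let H be a Hall π-subgroup of G, where π = π(H) is the set of prime divisors of |H|. Then every H-orbit on Ω has size n_π, where n_π = ∏_{p ∈ π} n_p and n_p is the largest power of p dividing n. -/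
/-!
For a Hall subgroup `H` of a finite group, `N_G(N_G(H)) = N_G(H)`: an element normalizing
`N_G(H)` conjugates `H` into `N_G(H)`, in which `H` is a normal Hall subgroup and so contains every
subgroup of its order. In a nilpotent group the normalizer condition then forces `N_G(H) = G`.

With `K` the stabilizer of `α`, normality of `H` gives `|Hα| = [H : H ∩ K] = [HK : K]`, hence
`n = [G : K] = |Hα| · [G : HK]`. The first factor divides `|H|` and the second divides `[G : H]`,
which is coprime to `|H|`; so `|Hα|` is the `π(H)`-part of `n`.
-/

open Subgroup MulAction

theorem Nat.prod_primeFactors_pow_factorization_mul_of_coprime {a b m : ℕ} (ha : a ∣ m)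
    (hm : m ≠ 0) (hb : m.Coprime b) :
    ∏ p ∈ m.primeFactors, p ^ (a * b).factorization p = a := by
  rcases eq_or_ne b 0 with rfl | hb0
  · obtain rfl : m = 1 := Nat.coprime_zero_right m |>.mp hb
    simpa using (Nat.dvd_one.mp ha).symm
  have ha0 : a ≠ 0 := ne_zero_of_dvd_ne_zero hm ha
  have hfac : ∀ p ∈ m.primeFactors, (a * b).factorization p = a.factorization p := by
    intro p hp
    have hpb : ¬ p ∣ b := fun hpb =>
      (Nat.prime_of_mem_primeFactors hp).one_lt.ne'
        (Nat.eq_one_of_dvd_coprimes hb (Nat.dvd_of_mem_primeFactors hp) hpb)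
    rw [Nat.factorization_mul ha0 hb0, Finsupp.add_apply,
      Nat.factorization_eq_zero_of_not_dvd hpb, add_zero]
  rw [Finset.prod_congr rfl fun p hp => by rw [hfac p hp],
    ← Finsupp.prod_of_support_subset _ (by simpa using Nat.primeFactors_mono ha hm) _
      (fun _ _ => pow_zero _),
    Nat.prod_factorization_pow_eq_self ha0]

namespace Subgroup

variable {G : Type*} [Group G] {H K L : Subgroup G}

theorem relIndex_dvd_relIndex_of_normal [(H.subgroupOf L).Normal] (hKL : K ≤ L) :
    H.relIndex K ∣ H.relIndex L :=
  relIndex_subgroupOf hKL ▸ relIndex_dvd_index_of_normal _ _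

theorem le_of_coprime_card_relIndex [(H.subgroupOf L).Normal] (hKL : K ≤ L)
    (h : (Nat.card K).Coprime (H.relIndex L)) : K ≤ H :=
  relIndex_eq_one.mp <|
    Nat.eq_one_of_dvd_coprimes h (relIndex_dvd_card H K) (relIndex_dvd_relIndex_of_normal hKL)

theorem relIndex_sup_right_of_left_normal [H.Normal] (h : H.relIndex K ≠ 0) :
    K.relIndex (H ⊔ K) = K.relIndex H := by
  have h₁ := relIndex_mul_relIndex (H ⊓ K) H (H ⊔ K) inf_le_left le_sup_left
  have h₂ := relIndex_mul_relIndex (H ⊓ K) K (H ⊔ K) inf_le_right le_sup_right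
  rw [inf_relIndex_left, relIndex_sup_left] at h₁
  rw [inf_relIndex_right, ← h₁, mul_comm] at h₂
  exact Nat.eq_of_mul_eq_mul_right (Nat.pos_of_ne_zero h) h₂

theorem normalizer_normalizer_of_coprime [Finite G] (hH : (Nat.card H).Coprime H.index) :
    normalizer (normalizer (H : Set G) : Set G) = normalizer H := by
  refine le_antisymm (fun g hg => ?_) le_normalizer
  rw [mem_normalizer_iff_map_conj_eq] at hg ⊢
  have hcard : Nat.card (H.map (MulAut.conj g : G →* G)) = Nat.card H :=
    card_map_of_injective (MulAut.conj g).injective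
  have hle : H.map (MulAut.conj g : G →* G) ≤ normalizer H := hg ▸ map_mono le_normalizer
  refine eq_of_le_of_card_ge (le_of_coprime_card_relIndex hle ?_) hcard.ge
  rw [hcard]
  exact hH.coprime_dvd_right (relIndex_dvd_index_of_le le_normalizer)

theorem normal_of_coprime_card_index [Finite G] [Group.IsNilpotent G]
    (hH : (Nat.card H).Coprime H.index) : H.Normal :=
  normalizer_eq_top_iff.mp <| normalizerCondition_iff_only_full_group_self_normalizing.mp
    Group.normalizerCondition_of_isNilpotent _ (normalizer_normalizer_of_coprime hH)

end Subgroup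

theorem MulAction.card_orbit_subgroup {G α : Type*} [Group G] [MulAction G α] (H : Subgroup G)
    (a : α) : Nat.card (orbit H a) = (stabilizer G a).relIndex H := by
  rw [Nat.card_coe_set_eq, ← index_stabilizer]
  rfl

theorem hall_orbit_size_general {G : Type*} [Group G] [Finite G] (hnil : Group.IsNilpotent G)
    {Ω : Type*} [MulAction G Ω]
    [MulAction.IsPretransitive G Ω]
    (H : Subgroup G) (hHall : Nat.Coprime (Nat.card ↥H) H.index) (α : Ω) :
    Nat.card ↥(MulAction.orbit H α) =
      ∏ p ∈ (Nat.card ↥H).primeFactors, p ^ ((Nat.card Ω).factorization p) := by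
  have := H.normal_of_coprime_card_index hHall
  set K := stabilizer G α
  have hn : Nat.card Ω = K.relIndex H * (H ⊔ K).index := by
    rw [← relIndex_sup_right_of_left_normal index_ne_zero_of_finite,
      relIndex_mul_index le_sup_right, index_stabilizer_of_transitive]
  rw [card_orbit_subgroup, hn]
  exact (Nat.prod_primeFactors_pow_factorization_mul_of_coprime (relIndex_dvd_card K H)
    Nat.card_pos.ne' (hHall.coprime_dvd_right (index_dvd_of_le le_sup_left))).symm

/-- If a finite nilpotent group `G` acts transitively and faithfully on a finite set `Ω`
of size `n`, and `H` is a Hall subgroup of `G`, then every `H`-orbit has size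
`n_π = ∏_{p ∈ π(H)} n_p`. -/
theorem hall_orbit_size {G : Type*} [Group G] [Finite G] (hnil : Group.IsNilpotent G)
    {Ω : Type*} [Finite Ω] [MulAction G Ω] [FaithfulSMul G Ω]
    [MulAction.IsPretransitive G Ω]
    (H : Subgroup G) (hHall : Nat.Coprime (Nat.card ↥H) H.index) (α : Ω) :
    Nat.card ↥(MulAction.orbit H α) =
      ∏ p ∈ (Nat.card ↥H).primeFactors, p ^ ((Nat.card Ω).factorization p) :=
  hall_orbit_size_general hnil H hHall α
end
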